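/- Let C be a triangulated category with suspension functor Σ and let M be a cluster-tilting subcategory of C, i.e. M is rigid (C(M, ΣM') = 0 for all M, M' in M) and every object X of C admits a triangle M1 --> M2 --> X --> ΣM1 with M1, M2 in M. Then the quotient category C/[ΣM] is equivalent to mod-M. -/

import Mathlib

open CategoryTheory CategoryTheory.Limits Opposite ZeroObject CategoryTheory.Pretriangulated

universe w v u

namespace Paper

section IdealQuotient

variable (C : Type u) [Category.{v} C] [Preadditive C]

/-- The additive subgroup of morphisms `X ⟶ Y` generated by the morphisms factoring through
an object satisfying `P`; this is the ideal `[D]` associated to the full subcategory `D`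
of objects satisfying `P`. -/
def idealOf (P : C → Prop) (X Y : C) : AddSubgroup (X ⟶ Y) :=
  AddSubgroup.closure
    {f : X ⟶ Y | ∃ (Z : C), P Z ∧ ∃ (u : X ⟶ Z) (v : Z ⟶ Y), f = u ≫ v}

variable {C}

lemma idealOf_comp_left (P : C → Prop) {X Y Z : C} (h : X ⟶ Y) {x : Y ⟶ Z}
    (hx : x ∈ idealOf C P Y Z) : h ≫ x ∈ idealOf C P X Z := by
  have hle : idealOf C P Y Z ≤
      AddSubgroup.comap (Preadditive.leftComp Z h) (idealOf C P X Z) := by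
    rw [idealOf, AddSubgroup.closure_le]
    rintro g ⟨W, hW, u, v, rfl⟩
    exact AddSubgroup.subset_closure ⟨W, hW, h ≫ u, v, by simp [Preadditive.leftComp]⟩
  exact hle hx

lemma idealOf_comp_right (P : C → Prop) {X Y Z : C} {x : X ⟶ Y} (h : Y ⟶ Z)
    (hx : x ∈ idealOf C P X Y) : x ≫ h ∈ idealOf C P X Z := by
  have hle : idealOf C P X Y ≤
      AddSubgroup.comap (Preadditive.rightComp X h) (idealOf C P X Z) := by
    rw [idealOf, AddSubgroup.closure_le]
    rintro g ⟨W, hW, u, v, rfl⟩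
    exact AddSubgroup.subset_closure ⟨W, hW, u, v ≫ h, by simp [Preadditive.rightComp]⟩
  exact hle hx

variable (C)

/-- The hom relation on `C` identifying two morphisms whose difference lies in the
ideal of morphisms factoring through an object satisfying `P`. -/
def idealRel (P : C → Prop) : HomRel C := fun {X Y} f g => f - g ∈ idealOf C P X Y

instance idealRel_congruence (P : C → Prop) : Congruence (idealRel C P) where
  equivalence :=
    { refl := fun f => by simpa [idealRel] using (idealOf C P _ _).zero_mem
      symm := fun {f g} h => by
        simpa [idealRel, neg_sub] using (idealOf C P _ _).neg_mem h
      trans := fun {f g h} h₁ h₂ => by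
        simpa [idealRel, sub_add_sub_cancel] using (idealOf C P _ _).add_mem h₁ h₂ }
  comp_left := by
    intro X Y Z f g g' h
    simpa [idealRel, Preadditive.comp_sub] using idealOf_comp_left P f h
  comp_right := by
    intro X Y Z f f' g h
    simpa [idealRel, Preadditive.sub_comp] using idealOf_comp_right P g h

lemma idealRel_add (P : C → Prop) ⦃X Y : C⦄ (f₁ f₂ g₁ g₂ : X ⟶ Y)
    (h₁ : idealRel C P f₁ f₂) (h₂ : idealRel C P g₁ g₂) :
    idealRel C P (f₁ + g₁) (f₂ + g₂) := by
  simpa [idealRel, add_sub_add_comm] using (idealOf C P X Y).add_mem h₁ h₂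

/-- The quotient of `C` by the ideal of morphisms factoring through an object
satisfying `P`; e.g. the stable category `C/[𝒫]`. -/
abbrev IdealQuot (P : C → Prop) := CategoryTheory.Quotient (idealRel C P)

instance (P : C → Prop) : Preadditive (IdealQuot C P) :=
  Quotient.preadditive _ (idealRel_add C P)

instance (P : C → Prop) : (Quotient.functor (idealRel C P)).Additive :=
  Quotient.functor_additive _ (idealRel_add C P)

end IdealQuotient

section FP

variable (C : Type u) [Category.{v} C] [Preadditive C]

/-- A contravariant additive-group-valued functor is finitely presented if it is a cokernel
of a morphism between representable functors. -/
def IsFP (F : Cᵒᵖ ⥤ AddCommGrpCat.{v}) : Prop :=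
  ∃ (X Y : C) (f : X ⟶ Y), Nonempty (F ≅ cokernel (preadditiveYoneda.map f))

/-- The category `mod-C` of finitely presented contravariant functors. -/
abbrev ModCat := ObjectProperty.FullSubcategory (IsFP C)

/-- A covariant functor is finitely presented if it is a cokernel of a morphism
between corepresentable functors. -/
def IsFPCo (F : C ⥤ AddCommGrpCat.{v}) : Prop :=
  ∃ (X Y : C) (f : X ⟶ Y), Nonempty (F ≅ cokernel (preadditiveCoyoneda.map f.op))

/-- The category `mod-Cᵒᵖ` of finitely presented covariant functors. -/
abbrev CoModCat := ObjectProperty.FullSubcategory (IsFPCo C)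

end FP

/-!
The equivalence is induced by the restricted Yoneda functor `X ↦ C(-, X)|_M`. For a triangle
`M₁ ⟶ M₂ ⟶ X ⟶ ΣM₁` with `Mᵢ ∈ M`, the long exact `C(M', -)`-sequence together with rigidity
`C(M', ΣM₁) = 0` makes `C(-, M₁)|_M ⟶ C(-, M₂)|_M ⟶ C(-, X)|_M ⟶ 0` exact. So the functor lands
in `mod-M`, and it is essentially surjective because any `M₁ ⟶ M₂` can be completed to such a
triangle. Exactness of `C(-, Y)` on the same triangle shows that it is full, and that a morphism
`X ⟶ Y` it kills vanishes on `M₂ ⟶ X`, hence factors through `X ⟶ ΣM₁`. Conversely rigidity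
kills `[ΣM]` on `M`, so the kernel of the functor is exactly the ideal `[ΣM]`.
-/

noncomputable def isColimitCokernelCoforkOfExactApp {J : Type*} [Category* J]
    {F G H : J ⥤ AddCommGrpCat.{v}} (α : F ⟶ G) (β : G ⟶ H) (w : α ≫ β = 0)
    (hexact : ∀ j, Function.Exact (α.app j) (β.app j))
    (hsurj : ∀ j, Function.Surjective (β.app j)) :
    IsColimit (CokernelCofork.ofπ β w) :=
  evaluationJointlyReflectsColimits _ fun j =>
    (isColimitMapCoconeCoforkEquiv' ((evaluation J AddCommGrpCat).obj j) w).symm <| by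
      let S := ShortComplex.mk (α.app j) (β.app j) (by rw [← NatTrans.comp_app, w]; rfl)
      have : Epi S.g := (AddCommGrpCat.epi_iff_surjective _).mpr (hsurj j)
      exact (S.ab_exact_iff_function_exact.mpr (hexact j)).gIsCokernel

section RestrictedYoneda

variable {C : Type u} [Category.{v} C] [Preadditive C] (M : C → Prop)

noncomputable def restrictedYoneda :
    C ⥤ (ObjectProperty.FullSubcategory M)ᵒᵖ ⥤ AddCommGrpCat.{v} :=
  preadditiveYoneda ⋙ (Functor.whiskeringLeft _ _ _).obj (ObjectProperty.ι M).op

variable {M}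

lemma restrictedYoneda_natTrans_app_comp {X Y : C}
    (τ : (restrictedYoneda M).obj X ⟶ (restrictedYoneda M).obj Y)
    {M' : (ObjectProperty.FullSubcategory M)ᵒᵖ} {N : ObjectProperty.FullSubcategory M}
    (k : M'.unop.obj ⟶ N.obj) (x : N.obj ⟶ X) :
    τ.app M' (k ≫ x) = k ≫ τ.app (op N) x :=
  ConcreteCategory.congr_hom (τ.naturality (ObjectProperty.homMk k).op) x

instance : (restrictedYoneda M).Additive where
  map_add {_ _ _ _} := by
    ext M' k
    exact Preadditive.comp_add _ _ _ _ _ _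

noncomputable def yonedaToRestrictedYoneda {N : ObjectProperty.FullSubcategory M} {X : C}
    (g : N.obj ⟶ X) : preadditiveYoneda.obj N ⟶ (restrictedYoneda M).obj X where
  app M' := AddCommGrpCat.ofHom
    { toFun := fun k => k.hom ≫ g
      map_zero' := zero_comp
      map_add' := fun _ _ => Preadditive.add_comp _ _ _ _ _ _ }
  naturality _ _ _ := by
    ext
    exact Category.assoc _ _ _

noncomputable def restrictedYonedaObjIsoCokernel {N₁ N₂ : ObjectProperty.FullSubcategory M}
    {X : C} (f : N₁ ⟶ N₂) (g : N₂.obj ⟶ X) (hfg : f.hom ≫ g = 0)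
    (hexact : ∀ (M' : ObjectProperty.FullSubcategory M) (k₂ : M'.obj ⟶ N₂.obj), k₂ ≫ g = 0 →
      ∃ k₁ : M'.obj ⟶ N₁.obj, k₁ ≫ f.hom = k₂)
    (hsurj : ∀ (M' : ObjectProperty.FullSubcategory M) (k : M'.obj ⟶ X),
      ∃ k₂ : M'.obj ⟶ N₂.obj, k₂ ≫ g = k) :
    (restrictedYoneda M).obj X ≅ cokernel (preadditiveYoneda.map f) :=
  have w : preadditiveYoneda.map f ≫ yonedaToRestrictedYoneda g = 0 := by
    ext M' k
    change (k.hom ≫ f.hom) ≫ g = 0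
    rw [Category.assoc, hfg, comp_zero]
  ((cokernelIsCokernel _).coconePointUniqueUpToIso
    (isColimitCokernelCoforkOfExactApp _ _ w
      (fun M' k₂ => by
        change k₂.hom ≫ g = 0 ↔ ∃ k₁ : M'.unop ⟶ N₁, k₁ ≫ f = k₂
        refine ⟨fun hk => ?_, ?_⟩
        · obtain ⟨k₁, hk₁⟩ := hexact M'.unop k₂.hom hk
          exact ⟨ObjectProperty.homMk k₁, by ext; exact hk₁⟩
        · rintro ⟨k₁, rfl⟩
          change (k₁.hom ≫ f.hom) ≫ g = 0
          rw [Category.assoc, hfg, comp_zero])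
      (fun M' k => by
        obtain ⟨k₂, hk₂⟩ := hsurj M'.unop k
        exact ⟨ObjectProperty.homMk k₂, hk₂⟩))).symm

end RestrictedYoneda

section Rigid

variable {C : Type u} [Category.{v} C] [Preadditive C] [HasShift C ℤ] {M : C → Prop}

variable (M) in
def suspension (Z : C) : Prop :=
  ∃ M₀ : C, M M₀ ∧ Nonempty (Z ≅ (shiftFunctor C (1 : ℤ)).obj M₀)

variable (M) in
abbrev IsRigid : Prop :=
  ∀ X Y : C, M X → M Y → ∀ f : X ⟶ (shiftFunctor C (1 : ℤ)).obj Y, f = 0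

variable (hrigid : IsRigid M)

include hrigid in
lemma eq_zero_of_suspension {M' Z : C} (hM' : M M') (hZ : suspension M Z) (k : M' ⟶ Z) :
    k = 0 := by
  obtain ⟨M₀, hM₀, ⟨e⟩⟩ := hZ
  rw [← Category.comp_id k, ← e.hom_inv_id, ← Category.assoc,
    hrigid _ _ hM' hM₀ (k ≫ e.hom), zero_comp]

include hrigid in
lemma restrictedYoneda_map_eq_zero_of_mem_idealOf {X Y : C} {w : X ⟶ Y}
    (hw : w ∈ idealOf C (suspension M) X Y) : (restrictedYoneda M).map w = 0 := by
  induction hw using AddSubgroup.closure_induction with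
  | mem w hw =>
    obtain ⟨Z, hZ, a, b, rfl⟩ := hw
    refine NatTrans.ext (funext fun M' => AddCommGrpCat.ext fun (k : M'.unop.obj ⟶ X) => ?_)
    change k ≫ a ≫ b = 0
    rw [← Category.assoc, eq_zero_of_suspension hrigid M'.unop.property hZ (k ≫ a), zero_comp]
  | zero => exact Functor.map_zero _ _ _
  | add u v _ _ hu hv => rw [Functor.map_add, hu, hv, add_zero]
  | neg u _ hu => rw [Functor.map_neg, hu, neg_zero]

end Rigid

section Triangulated

variable {C : Type u} [Category.{v} C] [Preadditive C] [HasZeroObject C] [HasShift C ℤ]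
  [∀ n : ℤ, (shiftFunctor C n).Additive] [Pretriangulated C] {M : C → Prop}
  (hrigid : IsRigid M)
  {N₁ N₂ : ObjectProperty.FullSubcategory M} {X : C} {f : N₁ ⟶ N₂} {g : N₂.obj ⟶ X}
  {h : X ⟶ (shiftFunctor C (1 : ℤ)).obj N₁.obj} (hT : Triangle.mk f.hom g h ∈ distTriang C)

include hrigid hT in
lemma exists_comp_eq_of_distTriang (M' : ObjectProperty.FullSubcategory M) (k : M'.obj ⟶ X) :
    ∃ k₂ : M'.obj ⟶ N₂.obj, k₂ ≫ g = k := by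
  obtain ⟨k₂, hk₂⟩ := Triangle.coyoneda_exact₃ _ hT k
    (hrigid _ _ M'.property N₁.property (k ≫ h))
  exact ⟨k₂, hk₂.symm⟩

include hrigid hT in
noncomputable def restrictedYonedaObjIsoCokernelOfDistTriang :
    (restrictedYoneda M).obj X ≅ cokernel (preadditiveYoneda.map f) :=
  restrictedYonedaObjIsoCokernel f g (comp_distTriang_mor_zero₁₂ _ hT)
    (fun _ k₂ hk₂ => (Triangle.coyoneda_exact₂ _ hT k₂ hk₂).imp fun _ h => h.symm)
    (exists_comp_eq_of_distTriang hrigid hT)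

include hrigid hT in
lemma restrictedYoneda_map_surjective_of_distTriang (Y : C) :
    Function.Surjective ((restrictedYoneda M).map : (X ⟶ Y) → _) := by
  intro τ
  have hb : f.hom ≫ τ.app (op N₂) g = 0 :=
    (restrictedYoneda_natTrans_app_comp τ f.hom g).symm.trans
      ((congrArg (τ.app (op N₁)) (comp_distTriang_mor_zero₁₂ _ hT)).trans (map_zero _))
  obtain ⟨u, hu⟩ : ∃ u : X ⟶ Y, τ.app (op N₂) g = g ≫ u :=
    Triangle.yoneda_exact₂ _ hT _ hb
  refine ⟨u, ?_⟩
  ext M' k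
  obtain ⟨k₂, rfl⟩ := exists_comp_eq_of_distTriang hrigid hT M'.unop k
  change (k₂ ≫ g) ≫ u = _
  rw [restrictedYoneda_natTrans_app_comp, hu, Category.assoc]

include hT in
lemma mem_idealOf_of_restrictedYoneda_map_eq_zero {Y : C} {w : X ⟶ Y}
    (hw : (restrictedYoneda M).map w = 0) : w ∈ idealOf C (suspension M) X Y := by
  have hgw : g ≫ w = 0 := ConcreteCategory.congr_hom (NatTrans.congr_app hw (op N₂)) g
  obtain ⟨t, rfl⟩ := Triangle.yoneda_exact₃ _ hT w hgw
  exact AddSubgroup.subset_closure ⟨_, ⟨N₁.obj, N₁.property, ⟨Iso.refl _⟩⟩, h, t, rfl⟩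

end Triangulated

section ClusterTilting

variable {C : Type u} [Category.{v} C] [Preadditive C] [HasZeroObject C] [HasShift C ℤ]
  [∀ n : ℤ, (shiftFunctor C n).Additive] [Pretriangulated C] {M : C → Prop}
  (hrigid : IsRigid M)
  (hct : ∀ X : C, ∃ (M₁ M₂ : C) (f : M₁ ⟶ M₂) (g : M₂ ⟶ X)
    (h : X ⟶ (shiftFunctor C (1 : ℤ)).obj M₁),
    M M₁ ∧ M M₂ ∧ Triangle.mk f g h ∈ distTriang C)

include hct in
lemma exists_distTriang (X : C) :
    ∃ (N₁ N₂ : ObjectProperty.FullSubcategory M) (f : N₁ ⟶ N₂) (g : N₂.obj ⟶ X)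
      (h : X ⟶ (shiftFunctor C (1 : ℤ)).obj N₁.obj), Triangle.mk f.hom g h ∈ distTriang C := by
  obtain ⟨M₁, M₂, f, g, h, hM₁, hM₂, hT⟩ := hct X
  exact ⟨⟨M₁, hM₁⟩, ⟨M₂, hM₂⟩, ObjectProperty.homMk f, g, h, hT⟩

include hrigid hct in
lemma isFP_restrictedYoneda_obj (X : C) :
    IsFP (ObjectProperty.FullSubcategory M) ((restrictedYoneda M).obj X) := by
  obtain ⟨N₁, N₂, f, g, h, hT⟩ := exists_distTriang hct X
  exact ⟨N₁, N₂, f, ⟨restrictedYonedaObjIsoCokernelOfDistTriang hrigid hT⟩⟩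

include hrigid hct in
lemma restrictedYoneda_map_eq_zero_iff {X Y : C} (w : X ⟶ Y) :
    (restrictedYoneda M).map w = 0 ↔ w ∈ idealOf C (suspension M) X Y := by
  obtain ⟨N₁, N₂, f, g, h, hT⟩ := exists_distTriang hct X
  exact ⟨mem_idealOf_of_restrictedYoneda_map_eq_zero hT,
    restrictedYoneda_map_eq_zero_of_mem_idealOf hrigid⟩

include hrigid hct

noncomputable def toModCat : C ⥤ ModCat (ObjectProperty.FullSubcategory M) :=
  ObjectProperty.lift _ (restrictedYoneda M) (isFP_restrictedYoneda_obj hrigid hct)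

noncomputable def quotientToModCat :
    IdealQuot C (suspension M) ⥤ ModCat (ObjectProperty.FullSubcategory M) :=
  CategoryTheory.Quotient.lift _ (toModCat hrigid hct) fun _ _ u v huv =>
    ObjectProperty.hom_ext _ <| sub_eq_zero.mp <| by
      change (restrictedYoneda M).map u - (restrictedYoneda M).map v = 0
      rw [← Functor.map_sub]
      exact (restrictedYoneda_map_eq_zero_iff hrigid hct _).mpr huv

instance : (quotientToModCat hrigid hct).Full where
  map_surjective {X Y} τ := by
    obtain ⟨N₁, N₂, f, g, h, hT⟩ := exists_distTriang hct X.as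
    obtain ⟨u, hu⟩ := restrictedYoneda_map_surjective_of_distTriang hrigid hT Y.as τ.hom
    exact ⟨(Quotient.functor _).map u, ObjectProperty.hom_ext _ hu⟩

instance : (quotientToModCat hrigid hct).Faithful where
  map_injective {X Y} φ ψ hφψ := by
    obtain ⟨u, rfl⟩ := (Quotient.functor (idealRel C (suspension M))).map_surjective φ
    obtain ⟨v, rfl⟩ := (Quotient.functor (idealRel C (suspension M))).map_surjective ψ
    refine (Quotient.functor_map_eq_iff _ u v).mpr
      ((restrictedYoneda_map_eq_zero_iff hrigid hct _).mp ?_)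
    rw [Functor.map_sub, sub_eq_zero]
    exact congrArg (fun φ => φ.hom) hφψ

instance : (quotientToModCat hrigid hct).EssSurj where
  mem_essImage F := by
    obtain ⟨N₁, N₂, f, ⟨e⟩⟩ := F.property
    obtain ⟨Z, g, h, hT⟩ := Pretriangulated.distinguished_cocone_triangle f.hom
    exact ⟨⟨Z⟩, ⟨ObjectProperty.isoMk _
      ((restrictedYonedaObjIsoCokernelOfDistTriang hrigid hT).trans e.symm)⟩⟩

end ClusterTilting

/-- Let `C` be a triangulated category with suspension `Σ` and `M` a
cluster-tilting subcategory. Then `C/[ΣM] ≃ mod-M`. -/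
theorem statement9 (C : Type u) [Category.{v} C] [Preadditive C] [HasZeroObject C]
    [HasShift C ℤ] [∀ n : ℤ, (CategoryTheory.shiftFunctor C n).Additive]
    [Pretriangulated C] [IsTriangulated C]
    (M : C → Prop)
    (hrigid : ∀ X Y : C, M X → M Y →
      ∀ f : X ⟶ (CategoryTheory.shiftFunctor C (1 : ℤ)).obj Y, f = 0)
    (hct : ∀ X : C, ∃ (M₁ M₂ : C) (f : M₁ ⟶ M₂) (g : M₂ ⟶ X)
      (h : X ⟶ (CategoryTheory.shiftFunctor C (1 : ℤ)).obj M₁),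
      M M₁ ∧ M M₂ ∧ Triangle.mk f g h ∈ distTriang C) :
    Nonempty (IdealQuot C
        (fun Z => ∃ M₀ : C, M M₀ ∧
          Nonempty (Z ≅ (CategoryTheory.shiftFunctor C (1 : ℤ)).obj M₀))
      ≌ ModCat (ObjectProperty.FullSubcategory M)) :=
  have : (quotientToModCat hrigid hct).IsEquivalence := {}
  ⟨(quotientToModCat hrigid hct).asEquivalence⟩

end Paper
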